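/- arXiv:2405.17049 — 3 statements merged into one kernel-verified Lean document; each statement's English description precedes it below -/
import Mathlib

section
/- Let n ≥ 1 and w ∈ {-1,1}ⁿ. Consider the symmetric (n+2)×(n+2) block matrix M with rows/columns indexed by (1, x₁,…,xₙ, y): M(1,1) = 1, M(1, xⱼ) = wⱼ, M(1,y) = 0, M(xᵢ,xⱼ) = wᵢwⱼ, M(xⱼ, y) = 0, M(y,y) = 1. Then M is positive semidefinite, all diagonal entries indexed by variables equal 1, and the linear functional it defines assigns to f(x,y) = y − (2(⟨w,x⟩+b)/(n+b) − 1) the value −1, where ⟨w,x⟩-moments are read off the first row (i.e. L(y) = 0, L(xⱼ) = wⱼ, L(1) = 1 gives L(f) = 0 − 2(n+b)/(n+b) + 1 = −1 using Σⱼ wⱼ² = n). -/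
open Matrix

/-- Index type: the constant 1, the variables x₁,…,xₙ, and the variable y. -/
abbrev MomIdx (n : ℕ) := Unit ⊕ Fin n ⊕ Unit

/-- The first-order moment matrix from the proof of Theorem 1 (hardness of the
first-order relaxation), with rows/columns indexed by (1, x₁,…,xₙ, y). -/
def momentMatrix (n : ℕ) (w : Fin n → ℝ) : Matrix (MomIdx n) (MomIdx n) ℝ :=
  fun i j =>
    match i, j with
    | .inl _, .inl _ => 1
    | .inl _, .inr (.inl k) => w k
    | .inl _, .inr (.inr _) => 0
    | .inr (.inl k), .inl _ => w k
    | .inr (.inl k), .inr (.inl l) => w k * w l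
    | .inr (.inl _), .inr (.inr _) => 0
    | .inr (.inr _), .inl _ => 0
    | .inr (.inr _), .inr (.inl _) => 0
    | .inr (.inr _), .inr (.inr _) => 1

def momentVector (n : ℕ) (w : Fin n → ℝ) : MomIdx n → ℝ :=
  Sum.elim 1 (Sum.elim w 0)

theorem Matrix.posSemidef_vecMulVec_self {ι R : Type*} [Finite ι] [CommRing R] [PartialOrder R]
    [StarRing R] [TrivialStar R] [StarOrderedRing R] (a : ι → R) :
    (vecMulVec a a).PosSemidef := by
  simpa using posSemidef_vecMulVec_self_star a

theorem momentMatrix_eq_vecMulVec_add (n : ℕ) (w : Fin n → ℝ) :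
    momentMatrix n w = vecMulVec (momentVector n w) (momentVector n w) +
      vecMulVec (Pi.single (.inr (.inr ())) 1) (Pi.single (.inr (.inr ())) 1) := by
  ext (_ | k | _) (_ | l | _) <;> simp [momentMatrix, momentVector, vecMulVec]

theorem momentMatrix_posSemidef (n : ℕ) (w : Fin n → ℝ) : (momentMatrix n w).PosSemidef := by
  rw [momentMatrix_eq_vecMulVec_add]
  exact (posSemidef_vecMulVec_self _).add (posSemidef_vecMulVec_self _)

theorem moment_matrix_feasible_value_general (n : ℕ) (w : Fin n → ℝ)
    (hw : ∀ k, w k = 1 ∨ w k = -1) (b : ℝ) (hb : |b| < n) :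
    (momentMatrix n w).PosSemidef ∧
    (∀ k : Fin n,
      momentMatrix n w (.inr (.inl k)) (.inr (.inl k)) = 1) ∧
    momentMatrix n w (.inr (.inr ())) (.inr (.inr ())) = 1 ∧
    (momentMatrix n w (.inl ()) (.inr (.inr ())) -
      (2 * ((∑ k, w k * momentMatrix n w (.inl ()) (.inr (.inl k))) + b) /
          ((n : ℝ) + b) - 1)) = -1 := by
  have hsq : ∀ k, w k * w k = 1 := fun k => mul_self_eq_one_iff.mpr (hw k)
  refine ⟨momentMatrix_posSemidef n w, hsq, rfl, ?_⟩
  have hsum : ∑ k, w k * momentMatrix n w (.inl ()) (.inr (.inl k)) = n := by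
    simp [momentMatrix, hsq]
  have hpos : 0 < (n : ℝ) + b := by linarith [neg_abs_le b]
  rw [hsum, mul_div_assoc, div_self hpos.ne']
  norm_num [momentMatrix]

/-- the moment matrix is PSD, its variable-diagonal entries are 1,
and the linear functional it defines assigns value −1 to
f(x,y) = y − (2(⟨w,x⟩+b)/(n+b) − 1). -/
theorem moment_matrix_feasible_value (n : ℕ) (hn : 1 ≤ n) (w : Fin n → ℝ)
    (hw : ∀ k, w k = 1 ∨ w k = -1) (b : ℝ) (hb : |b| < n) :
    (momentMatrix n w).PosSemidef ∧
    (∀ k : Fin n,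
      momentMatrix n w (.inr (.inl k)) (.inr (.inl k)) = 1) ∧
    momentMatrix n w (.inr (.inr ())) (.inr (.inr ())) = 1 ∧
    (momentMatrix n w (.inl ()) (.inr (.inr ())) -
      (2 * ((∑ k, w k * momentMatrix n w (.inl ()) (.inr (.inl k))) + b) /
          ((n : ℝ) + b) - 1)) = -1 :=
  moment_matrix_feasible_value_general n w hw b hb
end

section
/- Let n ≥ 1, w ∈ {-1,1}ⁿ, b ∈ ℝ with |b| < n, x ∈ ℝⁿ, y ∈ ℝ. If y² = 1, xₖ² = 1 for all k, y(⟨w,x⟩+b) ≥ 0, and (y+1)(n − ⟨w,x⟩) ≥ 0 and (1−y)(n + ⟨w,x⟩) ≥ 0, then both LP constraints hold: (n+b)(y+1) ≥ 2(⟨w,x⟩+b) and (n−b)(1−y) ≥ −2(⟨w,x⟩+b). -/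
/-! With `s = ⟨w,x⟩ + b`, the two LP constraints are the identities
`(n+b)(y+1) - 2s = (y-1)s + (y+1)(n - ⟨w,x⟩)` and `(n-b)(1-y) + 2s = (y+1)s + (1-y)(n + ⟨w,x⟩)`.
The last summands are the given tautologies, and `(y ± 1)s = (1 ± y)(ys)` is nonnegative because
`y² = 1` forces `|y| = 1`. -/

section SignOfUnitSquare

variable {R : Type*} [CommRing R] [LinearOrder R] [IsStrictOrderedRing R] {y t : R}

theorem abs_le_one_of_sq_eq_one (hy : y ^ 2 = 1) : |y| ≤ 1 :=
  (sq_le_one_iff_abs_le_one y).mp hy.le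

theorem add_one_mul_nonneg_of_sq_eq_one (hy : y ^ 2 = 1) (h : 0 ≤ y * t) :
    0 ≤ (y + 1) * t := by
  have h₁ : 0 ≤ 1 + y := by linarith [(abs_le.mp (abs_le_one_of_sq_eq_one hy)).1]
  have key : (y + 1) * t = (1 + y) * (y * t) := by linear_combination (-t) * hy
  rw [key]
  exact mul_nonneg h₁ h

theorem sub_one_mul_nonneg_of_sq_eq_one (hy : y ^ 2 = 1) (h : 0 ≤ y * t) :
    0 ≤ (y - 1) * t := by
  have h₁ : 0 ≤ 1 - y := by linarith [(abs_le.mp (abs_le_one_of_sq_eq_one hy)).2]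
  have key : (y - 1) * t = (1 - y) * (y * t) := by linear_combination t * hy
  rw [key]
  exact mul_nonneg h₁ h

end SignOfUnitSquare

theorem refined_implies_lp_general (n : ℕ) (w : Fin n → ℝ) (b : ℝ) (x : Fin n → ℝ) (y : ℝ)
    (hy : y ^ 2 = 1)
    (hsign : y * ((∑ k, w k * x k) + b) ≥ 0)
    (ht1 : (y + 1) * ((n : ℝ) - ∑ k, w k * x k) ≥ 0)
    (ht2 : (1 - y) * ((n : ℝ) + ∑ k, w k * x k) ≥ 0) :
    ((n : ℝ) + b) * (y + 1) ≥ 2 * ((∑ k, w k * x k) + b) ∧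
    ((n : ℝ) - b) * (1 - y) ≥ -(2 * ((∑ k, w k * x k) + b)) := by
  have hminus := sub_one_mul_nonneg_of_sq_eq_one hy hsign
  have hplus := add_one_mul_nonneg_of_sq_eq_one hy hsign
  constructor
  · linear_combination hminus + ht1
  · linear_combination hplus + ht2

/-- the refined quadratic constraints together with the
tautologies imply both LP constraints. -/
theorem refined_implies_lp (n : ℕ) (hn : 1 ≤ n) (w : Fin n → ℝ)
    (hw : ∀ k, w k = 1 ∨ w k = -1) (b : ℝ) (hb : |b| < n)
    (x : Fin n → ℝ) (hx : ∀ k, (x k) ^ 2 = 1) (y : ℝ) (hy : y ^ 2 = 1)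
    (hsign : y * ((∑ k, w k * x k) + b) ≥ 0)
    (ht1 : (y + 1) * ((n : ℝ) - ∑ k, w k * x k) ≥ 0)
    (ht2 : (1 - y) * ((n : ℝ) + ∑ k, w k * x k) ≥ 0) :
    ((n : ℝ) + b) * (y + 1) ≥ 2 * ((∑ k, w k * x k) + b) ∧
    ((n : ℝ) - b) * (1 - y) ≥ -(2 * ((∑ k, w k * x k) + b)) :=
  refined_implies_lp_general n w b x y hy hsign ht1 ht2
end

section
/- In the toy BNN certificate: for real variables x₁₁, x₁₂, x₂₂ satisfying x₁₁² = 1, x₁₂² = 1, x₂₂² = 1, the polynomial identity (2x₂₂ − 1) + 4 = (3/10)·[(2/3)(x₂₂−1)(x₁₂−x₁₁−1/2) + (2/3)(1+x₂₂)(2−x₁₂+x₁₁)] + (2/5)·(1/2)(1−x₁₁)² + (2/5)·(1/2)(1+x₁₂)² + (17/10)·(1/2)(1+x₂₂)² holds. Consequently, if additionally (x₂₂−1)(x₁₂−x₁₁−1/2) ≥ 0 and (1+x₂₂)(2−x₁₂+x₁₁) ≥ 0, then 2x₂₂ − 1 ≥ −4. -/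
/-- explicit SOS certificate for the toy BNN, certifying the
lower bound −4 on the adversarial objective 2x₂₂ − 1. -/
theorem toy_bnn_sos_certificate (x11 x12 x22 : ℝ)
    (h11 : x11 ^ 2 = 1) (h12 : x12 ^ 2 = 1) (h22 : x22 ^ 2 = 1) :
    ((2 * x22 - 1) + 4 =
      (3 / 10) * ((2 / 3) * ((x22 - 1) * (x12 - x11 - 1 / 2)) +
          (2 / 3) * ((1 + x22) * (2 - x12 + x11))) +
        (2 / 5) * ((1 / 2) * (1 - x11) ^ 2) +
        (2 / 5) * ((1 / 2) * (1 + x12) ^ 2) +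
        (17 / 10) * ((1 / 2) * (1 + x22) ^ 2)) ∧
    ((x22 - 1) * (x12 - x11 - 1 / 2) ≥ 0 →
      (1 + x22) * (2 - x12 + x11) ≥ 0 →
      2 * x22 - 1 ≥ -4) := by
  refine (fun certificate => ⟨certificate, fun hA hB => ?lowerBound⟩) ?identity
  case identity =>
    linear_combination (-1 / 5) * h11 - 1 / 5 * h12 - 17 / 20 * h22
  case lowerBound =>
    linarith [certificate, sq_nonneg (1 - x11), sq_nonneg (1 + x12), sq_nonneg (1 + x22)]
end
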